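/- arXiv:1811.04701 — 3 statements merged into one kernel-verified Lean document; each statement's English description precedes it below -/
import Mathlib

section
/- For every positive integer d, the evaluation at q=1 of the Weyl-Mahonian polynomial M_d^±(q,t) = ∑_{σ∈S_d^±} q^{l^±(σ)} t^{Wmaj(σ)} factorizes as (1+t)^d · ∏_{j=1}^d (t^j-1)/(t-1). Equivalently, ∑_{σ∈S_d^±} t^{Wmaj(σ)} = (1+t)^d ∏_{j=1}^d (1+t+⋯+t^{j-1}). -/
/-!
Write `Wmaj σ = maj σ + neg σ` and index the signs by values instead of positions: the word of a
signed permutation becomes `v ↦ ±(v + 1)` (signs `e` on values) composed with a permutation `π`.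
The major index only sees the relative order of the letters, so for fixed `e` the sum over `π` is
MacMahon's `∑_{π ∈ S_d} t^{maj π} = ∏_{j ≤ d} [j]_t`, while the signs contribute
`∑_e t^{#e} = (1 + t)^d`. MacMahon's formula is proved by induction: inserting a letter smaller
than all others into a word of length `n` at its `n + 1` positions raises `maj` by `0, 1, …, n`
in some order.
-/

open Finset

/-- A signed permutation of `{±1, …, ±d}` is encoded by an (unsigned)
permutation of `Fin d` together with a sign vector; `sVal σ i` is the value
`σ(i) ∈ {±1, …, ±d}` at `i ∈ {1, …, d}` (0-indexed). -/
def sVal {d : ℕ} (σ : Equiv.Perm (Fin d) × (Fin d → Bool)) (i : Fin d) : ℤ :=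
  (if σ.2 i then -1 else 1) * ((σ.1 i : ℕ) + 1)

/-- Number of inversions of a signed permutation:
pairs `i < j` with `σ(i)σ(j)(σ(i)-σ(j)) > 0`. -/
def sInv {d : ℕ} (σ : Equiv.Perm (Fin d) × (Fin d → Bool)) : ℕ :=
  (Finset.univ.filter (fun p : Fin d × Fin d => p.1 < p.2 ∧
    0 < sVal σ p.1 * sVal σ p.2 * (sVal σ p.1 - sVal σ p.2))).card

/-- Number of `i ∈ {1, …, d}` with `σ(i) < 0`. -/
def sNeg {d : ℕ} (σ : Equiv.Perm (Fin d) × (Fin d → Bool)) : ℕ :=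
  (Finset.univ.filter (fun i : Fin d => sVal σ i < 0)).card

/-- The type-BC (Coxeter) length
`l^±(σ) = #inversions + ∑_{σ(i)<0} (d + 1 + σ(i))`. -/
def sLenBC {d : ℕ} (σ : Equiv.Perm (Fin d) × (Fin d → Bool)) : ℕ :=
  sInv σ + ∑ i ∈ Finset.univ.filter (fun i : Fin d => sVal σ i < 0),
    ((d : ℤ) + 1 + sVal σ i).toNat

/-- The Weyl-Major index
`Wmaj(σ) = ∑_{0<i<d, σ(i)>σ(i+1)} i + #{i : σ(i) < 0}`. -/
def sWmaj {d : ℕ} (σ : Equiv.Perm (Fin d) × (Fin d → Bool)) : ℕ :=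
  (∑ i ∈ Finset.range d, if h : i + 1 < d then
      (if sVal σ ⟨i + 1, h⟩ < sVal σ ⟨i, Nat.lt_of_succ_lt h⟩ then i + 1 else 0)
    else 0) + sNeg σ

section Word

variable {α β : Type*} [LinearOrder α] [LinearOrder β]

/-- The major index of the word `g 0, …, g (n - 1)` of length `n`. -/
def maj (g : ℕ → α) (n : ℕ) : ℕ :=
  ∑ i ∈ range (n - 1), if g (i + 1) < g i then i + 1 else 0

def insertAt (g : ℕ → α) (p : ℕ) (v : α) : ℕ → α :=
  fun i => if i < p then g i else if i = p then v else g (i - 1)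

def descentsFrom (g : ℕ → α) (n p : ℕ) : ℕ :=
  #{j ∈ Ico p (n - 1) | g (j + 1) < g j}

def minInsertShift (g : ℕ → α) (n p : ℕ) : ℕ :=
  (if 0 < p ∧ p < n ∧ g p < g (p - 1) then 0 else p) + descentsFrom g n p

theorem maj_congr {g : ℕ → α} {g' : ℕ → β} {n : ℕ}
    (h : ∀ i, i + 1 < n → (g (i + 1) < g i ↔ g' (i + 1) < g' i)) : maj g n = maj g' n :=
  sum_congr rfl fun i hi => by simp only [h i (by have := mem_range.1 hi; omega)]

theorem sum_range_pred_split {M : Type*} [AddCommMonoid M] (f : ℕ → M) {n p : ℕ}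
    (hp : p ≤ n) :
    ∑ i ∈ range (n - 1), f i =
      ∑ i ∈ range (p - 1), f i + (if 0 < p ∧ p < n then f (p - 1) else 0) +
        ∑ i ∈ Ico p (n - 1), f i := by
  rcases Nat.eq_zero_or_pos p with rfl | hp0
  · rw [Nat.zero_sub, range_zero, sum_empty, if_neg (by omega), ← range_eq_Ico]
    simp
  by_cases hpn : p < n
  · rw [if_pos ⟨hp0, hpn⟩, ← sum_range_add_sum_Ico _ (by omega : p - 1 ≤ n - 1),
      sum_eq_sum_Ico_succ_bot (by omega : p - 1 < n - 1), Nat.sub_add_cancel hp0, add_assoc]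
  · rw [if_neg (by omega), Ico_eq_empty (by omega), show p - 1 = n - 1 by omega]
    simp

theorem descentsFrom_le (g : ℕ → α) (n p : ℕ) : descentsFrom g n p ≤ n - 1 - p :=
  (card_filter_le _ _).trans (Nat.card_Ico _ _).le

theorem descentsFrom_self (g : ℕ → α) (n : ℕ) : descentsFrom g n n = 0 := by
  simpa using descentsFrom_le g n n

theorem maj_insertAt_of_forall_lt {g : ℕ → α} {n p : ℕ} {v : α} (hp : p ≤ n)
    (hv : ∀ i < n, v < g i) :
    maj (insertAt g p v) (n + 1) = maj g n + minInsertShift g n p := by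
  set h := insertAt g p v
  have below : ∑ i ∈ range (p - 1), (if h (i + 1) < h i then i + 1 else 0) =
      ∑ i ∈ range (p - 1), (if g (i + 1) < g i then i + 1 else 0) :=
    sum_congr rfl fun i hi => by
      have := mem_range.1 hi
      simp only [h, insertAt, if_pos (by omega : i + 1 < p), if_pos (by omega : i < p)]
  have at_p : (if 0 < p ∧ p < n + 1 then (if h (p - 1 + 1) < h (p - 1) then p - 1 + 1 else 0)
      else 0) = if 0 < p then p else 0 := by
    by_cases hp0 : 0 < p
    · have hlt : h (p - 1 + 1) < h (p - 1) := by
        simp only [h, insertAt, Nat.sub_add_cancel hp0, lt_irrefl, if_false, if_true,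
          if_pos (by omega : p - 1 < p)]
        exact hv _ (by omega)
      rw [if_pos ⟨hp0, by omega⟩, if_pos hlt, if_pos hp0, Nat.sub_add_cancel hp0]
    · rw [if_neg (by omega), if_neg hp0]
  have above : ∑ i ∈ Ico p n, (if h (i + 1) < h i then i + 1 else 0) =
      ∑ j ∈ Ico p (n - 1), (if g (j + 1) < g j then j + 1 else 0) + descentsFrom g n p := by
    rcases eq_or_lt_of_le hp with rfl | hpn
    · simp [descentsFrom_self]
    rw [sum_eq_sum_Ico_succ_bot hpn, descentsFrom, card_filter, ← sum_add_distrib]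
    have hv' : ¬ h (p + 1) < h p := by
      simp only [h, insertAt, lt_irrefl, if_false, if_true, show ¬ p + 1 < p by omega,
        show p + 1 ≠ p by omega, Nat.add_sub_cancel]
      exact not_lt.2 (hv p hpn).le
    rw [if_neg hv', zero_add, show n = n - 1 + 1 by omega, ← sum_Ico_add' _ p (n - 1) 1]
    refine sum_congr (by rw [Nat.sub_add_cancel (by omega : 1 ≤ n)]) fun j hj => ?_
    have := mem_Ico.1 hj
    simp only [h, insertAt, show ¬ j + 1 + 1 < p by omega, show j + 1 + 1 ≠ p by omega,
      show ¬ j + 1 < p by omega, show j + 1 ≠ p by omega, if_false, Nat.add_sub_cancel]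
    split_ifs <;> omega
  rw [maj, maj, sum_range_pred_split _ (by omega : p ≤ n + 1),
    sum_range_pred_split _ hp, Nat.add_sub_cancel, below, at_p, above, minInsertShift]
  rcases Nat.eq_zero_or_pos p with rfl | hp0
  · simp
  · rw [Nat.sub_add_cancel hp0, if_pos hp0]
    by_cases hpn : p < n <;> by_cases hd : g p < g (p - 1) <;>
      simp only [hpn, hd, hp0, and_true, and_false, if_true, if_false] <;> omega

theorem minInsertShift_self (g : ℕ → α) (n : ℕ) : minInsertShift g n n = n := by
  simp [minInsertShift, descentsFrom_self]

theorem minInsertShift_lt {g : ℕ → α} {n p : ℕ} (hp : p < n) : minInsertShift g n p < n := by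
  have := descentsFrom_le g n p
  unfold minInsertShift
  split_ifs <;> omega

theorem descentsFrom_eq_add {g : ℕ → α} {n p q : ℕ} (hpq : p ≤ q) (hq : q < n) :
    descentsFrom g n p = #{j ∈ Ico p q | g (j + 1) < g j} + descentsFrom g n q := by
  rw [descentsFrom, descentsFrom, ← Ico_union_Ico_eq_Ico hpq (by omega : q ≤ n - 1),
    filter_union, card_union_of_disjoint
      (disjoint_filter_filter (Ico_disjoint_Ico_consecutive _ _ _))]

theorem minInsertShift_ne {g : ℕ → α} {n p q : ℕ} (hpq : p < q) (hq : q ≤ n) :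
    minInsertShift g n p ≠ minInsertShift g n q := by
  rcases eq_or_lt_of_le hq with rfl | hqn
  · exact (minInsertShift_lt hpq).ne.trans_eq (minInsertShift_self g q).symm
  have hsplit := descentsFrom_eq_add (g := g) hpq.le hqn
  set c := #{j ∈ Ico p q | g (j + 1) < g j}
  by_cases hdes : g q < g (q - 1)
  · have hc : 1 ≤ c := card_pos.2 ⟨q - 1, mem_filter.2
      ⟨mem_Ico.2 (by omega), by rwa [Nat.sub_add_cancel (by omega : 1 ≤ q)]⟩⟩
    have hq' : minInsertShift g n q = descentsFrom g n q := by
      simp [minInsertShift, hdes, hqn, show 0 < q by omega]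
    rw [hq', minInsertShift]
    omega
  · have hc : c ≤ q - 1 - p := by
      refine (card_le_card fun j hj => ?_).trans (Nat.card_Ico p (q - 1)).le
      obtain ⟨hj, hjdes⟩ := mem_filter.1 hj
      have hjq : j ≠ q - 1 := by
        rintro rfl
        exact hdes (by rwa [Nat.sub_add_cancel (by omega : 1 ≤ q)] at hjdes)
      exact mem_Ico.2 ⟨(mem_Ico.1 hj).1, by have := (mem_Ico.1 hj).2; omega⟩
    have hq' : minInsertShift g n q = q + descentsFrom g n q := by
      simp [minInsertShift, hdes]
    rw [hq', minInsertShift]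
    split_ifs <;> omega

theorem sum_pow_minInsertShift {R : Type*} [CommSemiring R] (t : R) (g : ℕ → α) (n : ℕ) :
    ∑ p ∈ range (n + 1), t ^ minInsertShift g n p = ∑ j ∈ range (n + 1), t ^ j := by
  have maps : Set.MapsTo (minInsertShift g n) (range (n + 1) : Set ℕ) (range (n + 1)) := by
    intro p hp
    simp only [coe_range, Set.mem_Iio] at hp ⊢
    rcases eq_or_lt_of_le (Nat.le_of_lt_succ hp) with rfl | hpn
    · rw [minInsertShift_self]; omega
    · have := minInsertShift_lt (g := g) hpn; omega
  have inj : Set.InjOn (minInsertShift g n) (range (n + 1) : Set ℕ) := by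
    intro p hp q hq hpq
    simp only [coe_range, Set.mem_Iio] at hp hq
    by_contra hne
    rcases Nat.lt_or_gt_of_ne hne with h | h
    · exact minInsertShift_ne h (by omega) hpq
    · exact minInsertShift_ne h (by omega) hpq.symm
  exact sum_nbij _ maps inj (((finite_toSet _).injOn_iff_bijOn_of_mapsTo maps).1 inj).surjOn
    fun _ _ => rfl

end Word

def toSeq {α : Type*} [Zero α] {n : ℕ} (w : Fin n → α) : ℕ → α :=
  fun i => if h : i < n then w ⟨i, h⟩ else 0

theorem toSeq_comp_insertNth {α β : Type*} [Zero β] (f : α → β) {n : ℕ}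
    (p : Fin (n + 1)) (a : α) (x : Fin n → α) {i : ℕ} (hi : i < n + 1) :
    toSeq (f ∘ p.insertNth a x) i = insertAt (toSeq (f ∘ x)) p (f a) i := by
  simp only [toSeq, insertAt, dif_pos hi, Function.comp_apply]
  rcases lt_trichotomy i p with h | rfl | h
  · have hi' : (⟨i, hi⟩ : Fin (n + 1)) = p.succAbove ⟨i, by omega⟩ := by
      rw [Fin.succAbove_of_castSucc_lt _ _ (by simp [Fin.lt_def]; omega)]; rfl
    rw [hi', Fin.insertNth_apply_succAbove, if_pos h, dif_pos (by omega)]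
  · simp
  · have hi' : (⟨i, hi⟩ : Fin (n + 1)) = p.succAbove ⟨i - 1, by omega⟩ := by
      rw [Fin.succAbove_of_le_castSucc _ _ (Fin.le_def.2 (by simp; omega))]
      ext; simp; omega
    rw [hi', Fin.insertNth_apply_succAbove, if_neg (by omega), if_neg (by omega),
      dif_pos (by omega)]

section MacMahon

open Equiv

def insertMinPerm {n : ℕ} (p : Fin (n + 1)) (e : Perm (Fin n)) : Perm (Fin (n + 1)) :=
  Perm.decomposeFin.symm (0, e) * p.cycleRange

theorem coe_insertMinPerm {n : ℕ} (p : Fin (n + 1)) (e : Perm (Fin n)) :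
    ⇑(insertMinPerm p e) = p.insertNth 0 (Fin.succ ∘ e) := by
  have hcons : ⇑(Perm.decomposeFin.symm (0, e)) = Fin.cons 0 (Fin.succ ∘ e) := by
    ext j
    cases j using Fin.cases <;> simp
  ext j
  rw [insertMinPerm, Perm.mul_apply, hcons, Fin.cons_apply_cycleRange]

theorem insertMinPerm_inv_zero {n : ℕ} (p : Fin (n + 1)) (e : Perm (Fin n)) :
    (insertMinPerm p e)⁻¹ 0 = p := by
  rw [Perm.inv_eq_iff_eq, coe_insertMinPerm, Fin.insertNth_apply_same]

theorem bijective_insertMinPerm (n : ℕ) :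
    Function.Bijective fun x : Fin (n + 1) × Perm (Fin n) => insertMinPerm x.1 x.2 := by
  refine (Fintype.bijective_iff_injective_and_card _).2 ⟨?_, ?_⟩
  · rintro ⟨p, e⟩ ⟨q, f⟩ h
    obtain rfl : p = q := by
      rw [← insertMinPerm_inv_zero p e, ← insertMinPerm_inv_zero q f]
      exact congrArg (fun σ : Perm _ => σ⁻¹ 0) h
    simpa using Perm.decomposeFin.symm.injective (mul_right_cancel h)
  · simp [Fintype.card_perm, Nat.factorial_succ]

variable {R : Type*} [CommSemiring R]

theorem maj_insertMinPerm {n : ℕ} (p : Fin (n + 1)) (e : Perm (Fin n)) :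
    maj (toSeq (Fin.val ∘ insertMinPerm p e)) (n + 1) =
      maj (toSeq (Fin.val ∘ e)) n + minInsertShift (toSeq (Fin.val ∘ Fin.succ ∘ e)) n p := by
  have hword : ∀ i < n + 1, toSeq (Fin.val ∘ insertMinPerm p e) i =
      insertAt (toSeq (Fin.val ∘ Fin.succ ∘ e)) p 0 i := fun i hi => by
    rw [coe_insertMinPerm, toSeq_comp_insertNth _ _ _ _ hi]; rfl
  rw [maj_congr (g' := insertAt (toSeq (Fin.val ∘ Fin.succ ∘ e)) p 0)
      fun i hi => by rw [hword i (by omega), hword (i + 1) hi],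
    maj_insertAt_of_forall_lt (Fin.is_le p) fun i hi => by simp [toSeq, hi]]
  congr 1
  exact maj_congr fun i hi => by simp [toSeq, hi, show i < n by omega]

theorem sum_pow_maj_perm (t : R) (n : ℕ) :
    ∑ σ : Perm (Fin n), t ^ maj (toSeq (Fin.val ∘ σ)) n =
      ∏ j ∈ Icc 1 n, ∑ i ∈ range j, t ^ i := by
  induction n with
  | zero => simp [maj]
  | succ n ih =>
    rw [← Fintype.sum_bijective _ (bijective_insertMinPerm n) _ _ fun _ => rfl,
      Fintype.sum_prod_type_right, prod_Icc_succ_top (by omega), ← ih, sum_mul]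
    refine sum_congr rfl fun e _ => ?_
    simp only [maj_insertMinPerm, pow_add, ← mul_sum]
    rw [Fin.sum_univ_eq_sum_range (fun p => t ^ minInsertShift _ n p), sum_pow_minInsertShift]

end MacMahon

section Signed

open Equiv

variable {R : Type*} [CommSemiring R]

theorem sum_pow_maj_comp_perm {α : Type*} [LinearOrder α] [Zero α] {n : ℕ} {w : Fin n → α}
    (hw : Function.Injective w) (t : R) :
    ∑ π : Perm (Fin n), t ^ maj (toSeq (w ∘ π)) n =
      ∑ π : Perm (Fin n), t ^ maj (toSeq (Fin.val ∘ π)) n := by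
  set τ := Tuple.sort w
  have hmono : StrictMono (w ∘ τ) :=
    (Tuple.monotone_sort w).strictMono_of_injective (hw.comp τ.injective)
  -- `w = (w ∘ τ) ∘ τ⁻¹` with `w ∘ τ` strictly monotone, so `w ∘ π` and `τ⁻¹ * π` have the
  -- same descents.
  refine Fintype.sum_equiv (Equiv.mulLeft τ⁻¹) _ _ fun π => ?_
  refine congrArg (t ^ ·) (maj_congr fun i hi => ?_)
  simp only [toSeq, dif_pos hi, dif_pos (by omega : i < n), Function.comp_apply,
    coe_mulLeft, Perm.mul_apply]
  rw [← Fin.lt_def, ← hmono.lt_iff_lt]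
  simp [τ]

theorem sum_pow_card_filter (t : R) (d : ℕ) :
    ∑ e : Fin d → Bool, t ^ #{v | e v} = (1 + t) ^ d := by
  have h := Fintype.prod_sum fun (_ : Fin d) (b : Bool) => if b then t else 1
  simp only [Fintype.sum_bool, if_true, Bool.false_eq_true, if_false, prod_const, card_univ,
    Fintype.card_fin] at h
  rw [add_comm, h]
  refine sum_congr rfl fun e _ => ?_
  rw [prod_ite, prod_const_one, mul_one, prod_const]

theorem natAbs_sVal {d : ℕ} (σ : Perm (Fin d) × (Fin d → Bool)) (i : Fin d) :
    (sVal σ i).natAbs = σ.1 i + 1 := by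
  unfold sVal
  split_ifs <;> simp <;> omega

theorem sVal_neg_iff {d : ℕ} (σ : Perm (Fin d) × (Fin d → Bool)) (i : Fin d) :
    sVal σ i < 0 ↔ σ.2 i := by
  unfold sVal
  cases σ.2 i <;> simp <;> omega

theorem injective_sVal_one {d : ℕ} (e : Fin d → Bool) : Function.Injective (sVal (1, e)) :=
  fun u v h => by
    have := congrArg Int.natAbs h
    simp only [natAbs_sVal, Perm.one_apply] at this
    exact Fin.ext (by omega)

theorem sVal_mk_comp {d : ℕ} (π : Perm (Fin d)) (e : Fin d → Bool) :
    sVal (π, e ∘ π) = sVal (1, e) ∘ π :=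
  rfl

theorem sNeg_mk_comp {d : ℕ} (π : Perm (Fin d)) (e : Fin d → Bool) :
    sNeg (π, e ∘ π) = #{v | e v} := by
  simp only [sNeg, card_filter, sVal_neg_iff, Function.comp_apply]
  exact Equiv.sum_comp π fun v => if e v then 1 else 0

theorem sWmaj_eq {d : ℕ} (σ : Perm (Fin d) × (Fin d → Bool)) :
    sWmaj σ = maj (toSeq (sVal σ)) d + sNeg σ := by
  rw [sWmaj]
  congr 1
  rcases d with _ | d
  · simp [maj]
  rw [sum_range_succ, dif_neg (by omega), add_zero, maj, Nat.add_sub_cancel]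
  refine sum_congr rfl fun i hi => ?_
  have := mem_range.1 hi
  simp [toSeq, this, this.le]

end Signed

theorem stmt7_general {R : Type*} [CommRing R] (t : R) (d : ℕ) :
    ∑ σ : Equiv.Perm (Fin d) × (Fin d → Bool), t ^ sWmaj σ =
      (1 + t) ^ d * ∏ j ∈ Finset.Icc 1 d, ∑ i ∈ Finset.range j, t ^ i := by
  rw [Fintype.sum_prod_type]
  have reindex : ∀ π : Equiv.Perm (Fin d), ∑ s, t ^ sWmaj (π, s) = ∑ e, t ^ sWmaj (π, e ∘ π) :=
    fun π => (Fintype.sum_equiv (Equiv.arrowCongr π.symm (Equiv.refl Bool)) _ _ fun _ => rfl).symm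
  simp only [reindex]
  simp only [sWmaj_eq, sVal_mk_comp, sNeg_mk_comp, pow_add]
  rw [sum_comm, ← sum_pow_card_filter t d, sum_mul]
  refine sum_congr rfl fun e _ => ?_
  rw [← sum_mul, mul_comm, sum_pow_maj_comp_perm (injective_sVal_one e), sum_pow_maj_perm]

/-- `∑_{σ ∈ S_d^±} t^{Wmaj(σ)} = (1+t)^d ∏_{j=1}^d (1 + t + ⋯ + t^{j-1})`. -/
theorem stmt7 {R : Type*} [CommRing R] (t : R) (d : ℕ) (hd : 0 < d) :
    ∑ σ : Equiv.Perm (Fin d) × (Fin d → Bool), t ^ sWmaj σ =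
      (1 + t) ^ d * ∏ j ∈ Finset.Icc 1 d, ∑ i ∈ Finset.range j, t ^ i :=
  stmt7_general t d
end

section
/- For every natural number d, ∑_{l=0}^{⌊d/2⌋} C(d,2l)_q q^{l(2l-1)} = ∏_{j=1}^{d-1} (1 + q^j), where C(d,2l)_q is the Gaussian binomial coefficient. -/
/-!
By the q-binomial theorem, `∑ₖ C(d+1,k)_q q^(k choose 2) = ∏_{j=0}^{d} (1 + q^j)`. Pascal's rule
splits the `k`-th term of the left side as `t(k-1) + t(k)`, where `t(k) = C(d,k)_q q^(k choose 2) q^k`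
is the `k`-th term of the q-binomial expansion of `∏_{j=0}^{d-1} (1 + q^j q)`. Summing only the even
`k` therefore still picks up every `t(k)` exactly once, so the even part equals
`∏_{j=1}^{d} (1 + q^j)`; the exponent of the even terms is `(2l choose 2) = l(2l-1)`.
-/

/-- Gaussian (q-)binomial coefficient `C(d,k)_q`, defined by
`C(d,0)_q = 1`, `C(0,k+1)_q = 0` and `C(d,i)_q = C(d-1,i-1)_q + q^i C(d-1,i)_q`. -/
def qBinom {R : Type*} [CommRing R] (q : R) : ℕ → ℕ → R
  | _, 0 => 1
  | 0, _ + 1 => 0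
  | d + 1, k + 1 => qBinom q d k + q ^ (k + 1) * qBinom q d (k + 1)

open Finset

theorem Nat.choose_two_mul_two (l : ℕ) : (2 * l).choose 2 = l * (2 * l - 1) := by
  rw [Nat.choose_two_right, mul_assoc, Nat.mul_div_cancel_left _ two_pos]

theorem Finset.sum_range_two_mul_add_one {M : Type*} [AddCommMonoid M] (b : ℕ → M) (m : ℕ) :
    ∑ k ∈ range (2 * m + 1), b k = b 0 + ∑ l ∈ range m, (b (2 * l + 1) + b (2 * l + 2)) := by
  induction m with
  | zero => simp
  | succ m ih =>
    rw [show 2 * (m + 1) + 1 = 2 * m + 1 + 1 + 1 by ring, sum_range_succ, sum_range_succ, ih,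
      sum_range_succ]
    abel

section qBinom

variable {R : Type*} [CommRing R] (q : R)

theorem qBinom_zero_right (d : ℕ) : qBinom q d 0 = 1 := by
  cases d <;> rfl

theorem qBinom_succ_succ (d k : ℕ) :
    qBinom q (d + 1) (k + 1) = qBinom q d k + q ^ (k + 1) * qBinom q d (k + 1) :=
  rfl

theorem qBinom_eq_zero_of_lt {d k : ℕ} (h : d < k) : qBinom q d k = 0 := by
  induction d generalizing k with
  | zero => obtain ⟨k, rfl⟩ := Nat.exists_eq_succ_of_ne_zero h.ne'; rfl
  | succ d ih =>
    obtain ⟨k, rfl⟩ := Nat.exists_eq_succ_of_ne_zero (Nat.ne_zero_of_lt h)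
    rw [qBinom_succ_succ, ih (by omega), ih (by omega), mul_zero, add_zero]

/-- The `k`-th term of the q-binomial expansion of `∏_{j<d} (1 + q^j x)`. -/
def qBinomTerm (x : R) (d k : ℕ) : R :=
  qBinom q d k * q ^ k.choose 2 * x ^ k

variable {q}

theorem qBinomTerm_zero_right (x : R) (d : ℕ) : qBinomTerm q x d 0 = 1 := by
  simp [qBinomTerm, qBinom_zero_right]

theorem qBinomTerm_eq_zero_of_lt (x : R) {d k : ℕ} (h : d < k) : qBinomTerm q x d k = 0 := by
  simp [qBinomTerm, qBinom_eq_zero_of_lt q h]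

theorem qBinomTerm_succ_succ (x : R) (d k : ℕ) :
    qBinomTerm q x (d + 1) (k + 1) =
      x * qBinomTerm q (q * x) d k + qBinomTerm q (q * x) d (k + 1) := by
  simp only [qBinomTerm, qBinom_succ_succ, Nat.choose_succ_succ', Nat.choose_one_right]
  ring

/-- The q-binomial theorem. -/
theorem sum_qBinomTerm (x : R) (d : ℕ) :
    ∑ k ∈ range (d + 1), qBinomTerm q x d k = ∏ j ∈ range d, (1 + q ^ j * x) := by
  induction d generalizing x with
  | zero => simp [qBinomTerm_zero_right]
  | succ d ih =>
    set t := qBinomTerm q (q * x) d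
    have hshift : ∑ k ∈ range (d + 1), t (k + 1) + 1 = ∑ k ∈ range (d + 1), t k := by
      rw [← qBinomTerm_zero_right (q * x) d, ← sum_range_succ', sum_range_succ,
        show t (d + 1) = 0 from qBinomTerm_eq_zero_of_lt _ d.lt_succ_self, add_zero]
    calc ∑ k ∈ range (d + 1 + 1), qBinomTerm q x (d + 1) k
        = x * ∑ k ∈ range (d + 1), t k + (∑ k ∈ range (d + 1), t (k + 1) + 1) := by
          simp only [sum_range_succ' _ (d + 1), qBinomTerm_succ_succ, qBinomTerm_zero_right,
            sum_add_distrib, mul_sum, t]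
          abel
      _ = (1 + x) * ∏ j ∈ range d, (1 + q ^ j * (q * x)) := by rw [hshift, ih]; ring
      _ = ∏ j ∈ range (d + 1), (1 + q ^ j * x) := by
          rw [prod_range_succ', pow_zero, one_mul, mul_comm]
          simp only [pow_succ, mul_assoc]

theorem sum_qBinomTerm_one_even (d : ℕ) :
    ∑ l ∈ range ((d + 1) / 2 + 1), qBinomTerm q 1 (d + 1) (2 * l) =
      ∑ k ∈ range (d + 1), qBinomTerm q q d k := by
  set t := qBinomTerm q q d
  calc ∑ l ∈ range ((d + 1) / 2 + 1), qBinomTerm q 1 (d + 1) (2 * l)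
      = t 0 + ∑ l ∈ range ((d + 1) / 2), (t (2 * l + 1) + t (2 * l + 2)) := by
        simp only [sum_range_succ', mul_add, mul_zero, qBinomTerm_succ_succ, qBinomTerm_zero_right,
          one_mul, mul_one, add_assoc, t]
        rw [add_comm]
    _ = ∑ k ∈ range (2 * ((d + 1) / 2) + 1), t k := (sum_range_two_mul_add_one t _).symm
    _ = ∑ k ∈ range (d + 1), t k :=
        eventually_constant_sum (fun _ hk => qBinomTerm_eq_zero_of_lt _ hk) (by omega)

end qBinom

/-- `∑_{l=0}^{⌊d/2⌋} C(d,2l)_q q^{l(2l-1)} = ∏_{j=1}^{d-1} (1 + q^j)`. -/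
theorem stmt14 {R : Type*} [CommRing R] (q : R) (d : ℕ) :
    ∑ l ∈ Finset.range (d / 2 + 1), qBinom q d (2 * l) * q ^ (l * (2 * l - 1)) =
      ∏ j ∈ Finset.Icc 1 (d - 1), (1 + q ^ j) := by
  cases d with
  | zero => simp [qBinom]
  | succ d =>
    have hterm (l : ℕ) : qBinom q (d + 1) (2 * l) * q ^ (l * (2 * l - 1)) =
        qBinomTerm q 1 (d + 1) (2 * l) := by
      rw [qBinomTerm, Nat.choose_two_mul_two, one_pow, mul_one]
    simp only [hterm, sum_qBinomTerm_one_even, sum_qBinomTerm, add_tsub_cancel_right,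
      ← Ico_add_one_right_eq_Icc, prod_Ico_eq_prod_range, pow_succ, add_comm 1]
end

section
/- Let q be an odd prime power and let (F_q^{2d}, ω) be a nondegenerate symplectic space of dimension 2d over F_q. The number of k-dimensional isotropic subspaces of F_q^{2d} (for 0 ≤ k ≤ d) equals ∏_{j=0}^{k-1} (q^{2d-j} - q^j)/(q^k - q^j) = ∏_{j=0}^{k-1} (1-q^{2d-2j})/(1-q^{k-j}). -/
/-!
Count isotropic frames, i.e. linearly independent `k`-tuples with pairwise orthogonal entries,
in two ways. A frame `s` of length `j` extends by exactly the vectors of `S^⊥ \ S`, where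
`S = span s`; since `S` is isotropic, `S ≤ S^⊥`, and nondegeneracy gives `dim S^⊥ = n - j`, so
there are `q^(n-j) - q^j` extensions. On the other hand, a frame is an isotropic subspace
together with an ordered basis of it, and a `k`-dimensional space has `∏_{j<k} (q^k - q^j)`
ordered bases.
-/

open Module Submodule

namespace LinearMap.BilinForm

variable {K V : Type*} [Field K] [AddCommGroup V] [Module K V]

abbrev IsotropicFrame (B : LinearMap.BilinForm K V) (k : ℕ) :=
  {s : Fin k → V // LinearIndependent K s ∧ ∀ i j, B (s i) (s j) = 0}

abbrev IsotropicSubspace (B : LinearMap.BilinForm K V) (k : ℕ) :=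
  {W : Submodule K V // finrank K W = k ∧ ∀ x ∈ W, ∀ y ∈ W, B x y = 0}

variable {B : LinearMap.BilinForm K V}

lemma mem_orthogonal_span_range_iff {ι : Type*} {s : ι → V} {v : V} :
    v ∈ B.orthogonal (span K (Set.range s)) ↔ ∀ i, B (s i) v = 0 := by
  refine ⟨fun h i => h _ (subset_span ⟨i, rfl⟩), fun h => ?_⟩
  have : span K (Set.range s) ≤ LinearMap.ker (B.flip v) :=
    span_le.2 <| Set.range_subset_iff.2 fun i => by simpa using h i
  exact fun y hy => by simpa using this hy

lemma span_range_le_orthogonal {ι : Type*} {s : ι → V} (hs : ∀ i j, B (s i) (s j) = 0) :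
    span K (Set.range s) ≤ B.orthogonal (span K (Set.range s)) :=
  span_le.2 <| Set.range_subset_iff.2 fun j => mem_orthogonal_span_range_iff.2 (hs · j)

lemma isotropic_snoc_iff (hB : B.IsAlt) {k : ℕ} {s : Fin k → V} {v : V} :
    (∀ i j, B (Fin.snoc (α := fun _ => V) s v i) (Fin.snoc (α := fun _ => V) s v j) = 0) ↔
      (∀ i j, B (s i) (s j) = 0) ∧ v ∈ B.orthogonal (span K (Set.range s)) := by
  simp only [Fin.forall_fin_succ', Fin.snoc_castSucc, Fin.snoc_last, hB v,
    mem_orthogonal_span_range_iff, hB.isRefl.eq_iff (x := v), forall_and]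
  tauto

def isotropicFrameSnocEquiv (hB : B.IsAlt) (k : ℕ) :
    B.IsotropicFrame (k + 1) ≃ Σ s : B.IsotropicFrame k,
      ↥((B.orthogonal (span K (Set.range s.1)) : Set V) \ span K (Set.range s.1)) where
  toFun t := by
    have h := t.2
    rw [← Fin.snoc_init_self t.1, linearIndependent_finSnoc, isotropic_snoc_iff hB] at h
    exact ⟨⟨Fin.init t.1, h.1.1, h.2.1⟩, t.1 (Fin.last k), h.2.2, h.1.2⟩
  invFun p := ⟨Fin.snoc p.1.1 p.2.1, linearIndependent_finSnoc.2 ⟨p.1.2.1, p.2.2.2⟩,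
    (isotropic_snoc_iff hB).2 ⟨p.1.2.2, p.2.2.1⟩⟩
  left_inv t := Subtype.ext (Fin.snoc_init_self t.1)
  right_inv p := Sigma.subtype_ext (Subtype.ext (Fin.init_snoc (α := fun _ => V) _ _))
    (Fin.snoc_last (α := fun _ => V) _ _)

def isotropicFrameSpan (k : ℕ) (s : B.IsotropicFrame k) : B.IsotropicSubspace k :=
  ⟨span K (Set.range s.1), by rw [finrank_span_eq_card s.2.1, Fintype.card_fin],
    fun x hx y hy => span_range_le_orthogonal s.2.2 hy x hx⟩

def isotropicFrameSpanFiberEquiv [FiniteDimensional K V] {k : ℕ} (W : B.IsotropicSubspace k) :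
    {s // isotropicFrameSpan k s = W} ≃ {u : Fin k → W.1 // LinearIndependent K u} where
  toFun s := ⟨fun i => ⟨s.1.1 i, congrArg Subtype.val s.2 ▸ subset_span ⟨i, rfl⟩⟩,
    s.1.2.1.of_comp W.1.subtype⟩
  invFun u := ⟨⟨fun i => u.1 i, u.2.map' _ (ker_subtype _),
    fun i j => W.2.2 _ (u.1 i).2 _ (u.1 j).2⟩, Subtype.ext <| by
      have htop : span K (Set.range u.1) = ⊤ := eq_top_of_finrank_eq <| by
        rw [finrank_span_eq_card u.2, Fintype.card_fin, W.2.1]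
      change span K (Set.range (W.1.subtype ∘ u.1)) = W.1
      rw [Set.range_comp, ← map_span, htop, map_subtype_top]⟩
  left_inv s := rfl
  right_inv u := rfl

section Counting

variable [Fintype K] [Finite V]

local notation "q" => Fintype.card K
local notation "n" => finrank K V

lemma card_orthogonal_sdiff (hB : B.Nondegenerate) {W : Submodule K V}
    (hW : W ≤ B.orthogonal W) :
    Nat.card ↥((B.orthogonal W : Set V) \ W) = q ^ (n - finrank K W) - q ^ finrank K W := by
  rw [Nat.card_coe_set_eq, Set.ncard_sdiff hW, ← Nat.card_coe_set_eq, ← Nat.card_coe_set_eq,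
    SetLike.coe_sort_coe, SetLike.coe_sort_coe,
    natCard_eq_pow_finrank (K := K) (V := B.orthogonal W), natCard_eq_pow_finrank (K := K) (V := W),
    finrank_orthogonal hB, Nat.card_eq_fintype_card]

lemma card_isotropicFrame (hB : B.IsAlt) (hBnd : B.Nondegenerate) {k : ℕ} (hk : 2 * k ≤ n) :
    Nat.card (B.IsotropicFrame k) = ∏ j ∈ Finset.range k, (q ^ (n - j) - q ^ j) := by
  induction k with
  | zero =>
    rw [Finset.prod_range_zero, Nat.card_eq_one_iff_unique]
    exact ⟨inferInstance, ⟨⟨Fin.elim0, linearIndependent_empty_type, fun i => i.elim0⟩⟩⟩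
  | succ k ih =>
    have := Fintype.ofFinite (B.IsotropicFrame k)
    have hfiber (s : B.IsotropicFrame k) :
        Nat.card ↥((B.orthogonal (span K (Set.range s.1)) : Set V) \ span K (Set.range s.1)) =
          q ^ (n - k) - q ^ k := by
      rw [card_orthogonal_sdiff hBnd (span_range_le_orthogonal s.2.2),
        finrank_span_eq_card s.2.1, Fintype.card_fin]
    rw [Nat.card_congr (isotropicFrameSnocEquiv hB k), Nat.card_sigma,
      Finset.sum_congr rfl fun s _ => hfiber s, Finset.sum_const, Finset.card_univ,
      ← Nat.card_eq_fintype_card, ih (by omega), smul_eq_mul, Finset.prod_range_succ]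

lemma card_isotropicFrame_eq_card_isotropicSubspace_mul (k : ℕ) :
    Nat.card (B.IsotropicFrame k) =
      Nat.card (B.IsotropicSubspace k) * ∏ j ∈ Finset.range k, (q ^ k - q ^ j) := by
  have := Fintype.ofFinite (B.IsotropicSubspace k)
  have hfiber (W : B.IsotropicSubspace k) :
      Nat.card {s // isotropicFrameSpan k s = W} = ∏ j ∈ Finset.range k, (q ^ k - q ^ j) := by
    rw [Nat.card_congr (isotropicFrameSpanFiberEquiv W), card_linearIndependent W.2.1.ge, W.2.1,
      Fin.prod_univ_eq_prod_range (fun j => q ^ k - q ^ j)]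
  rw [← Nat.card_congr (Equiv.sigmaFiberEquiv (isotropicFrameSpan k)), Nat.card_sigma,
    Finset.sum_congr rfl fun W _ => hfiber W, Finset.sum_const, Finset.card_univ,
    ← Nat.card_eq_fintype_card, smul_eq_mul]

theorem card_isotropicSubspace (hB : B.IsAlt) (hBnd : B.Nondegenerate) {k : ℕ}
    (hk : 2 * k ≤ n) :
    (Nat.card (B.IsotropicSubspace k) : ℚ) =
      ∏ j ∈ Finset.range k, (((q : ℚ) ^ (n - j) - (q : ℚ) ^ j) / ((q : ℚ) ^ k - (q : ℚ) ^ j)) := by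
  have hq : 1 < q := Fintype.one_lt_card
  have hcast {a b : ℕ} (hab : b ≤ a) : ((q ^ a - q ^ b : ℕ) : ℚ) = (q : ℚ) ^ a - (q : ℚ) ^ b := by
    rw [Nat.cast_sub (Nat.pow_le_pow_right hq.le hab)]
    push_cast
    rfl
  have hden : ∏ j ∈ Finset.range k, ((q : ℚ) ^ k - (q : ℚ) ^ j) ≠ 0 :=
    Finset.prod_ne_zero_iff.2 fun j hj => sub_ne_zero.2
      (pow_lt_pow_right₀ (by exact_mod_cast hq) (Finset.mem_range.1 hj)).ne'
  have hcount := congrArg (Nat.cast (R := ℚ)) <|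
    (card_isotropicFrame_eq_card_isotropicSubspace_mul (B := B) k).symm.trans
      (card_isotropicFrame hB hBnd hk)
  rw [Nat.cast_mul, Nat.cast_prod, Nat.cast_prod,
    Finset.prod_congr rfl fun j hj => hcast (Finset.mem_range.1 hj).le,
    Finset.prod_congr rfl fun j hj => hcast (by have := Finset.mem_range.1 hj; omega)] at hcount
  rw [Finset.prod_div_distrib, eq_div_iff hden, hcount]

end Counting

end LinearMap.BilinForm

theorem stmt16_general (F : Type*) [Field F] [Fintype F] (q : ℕ)
    (hq : Fintype.card F = q)
    (d k : ℕ) (hk : k ≤ d)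
    (ω : (Fin (2 * d) → F) →ₗ[F] (Fin (2 * d) → F) →ₗ[F] F)
    (halt : ∀ v, ω v v = 0)
    (hnd : ∀ v, (∀ w, ω v w = 0) → v = 0) :
    (Nat.card {W : Submodule F (Fin (2 * d) → F) //
        Module.finrank F W = k ∧ ∀ x ∈ W, ∀ y ∈ W, ω x y = 0} : ℚ) =
      ∏ j ∈ Finset.range k,
        ((q : ℚ) ^ (2 * d - j) - (q : ℚ) ^ j) / ((q : ℚ) ^ k - (q : ℚ) ^ j) := by
  have hω : LinearMap.BilinForm.IsAlt ω := halt
  have hn : finrank F (Fin (2 * d) → F) = 2 * d := by simp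
  have hcount := LinearMap.BilinForm.card_isotropicSubspace hω
    (hω.isRefl.nondegenerate_iff_separatingLeft.2 hnd) (k := k) (by omega)
  rwa [hn, hq] at hcount

/-- Over a finite field of odd cardinality `q`, the number of `k`-dimensional
isotropic subspaces of a nondegenerate symplectic space of dimension `2d`
equals `∏_{j=0}^{k-1} (q^{2d-j} - q^j)/(q^k - q^j)`. -/
theorem stmt16 (F : Type*) [Field F] [Fintype F] (q : ℕ)
    (hq : Fintype.card F = q) (hodd : Odd q)
    (d k : ℕ) (hk : k ≤ d)
    (ω : (Fin (2 * d) → F) →ₗ[F] (Fin (2 * d) → F) →ₗ[F] F)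
    (halt : ∀ v, ω v v = 0)
    (hnd : ∀ v, (∀ w, ω v w = 0) → v = 0) :
    (Nat.card {W : Submodule F (Fin (2 * d) → F) //
        Module.finrank F W = k ∧ ∀ x ∈ W, ∀ y ∈ W, ω x y = 0} : ℚ) =
      ∏ j ∈ Finset.range k,
        ((q : ℚ) ^ (2 * d - j) - (q : ℚ) ^ j) / ((q : ℚ) ^ k - (q : ℚ) ^ j) :=
  stmt16_general F q hq d k hk ω halt hnd
end
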